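/- Let E_0,...,E_ℓ be K×K symmetric idempotent matrices that are pairwise orthogonal (E_i E_j = 0 for i≠j) and positive semidefinite, and let Λ_0,...,Λ_ℓ be symmetric n×n matrices. Then the projection onto the cone of positive semidefinite matrices of ∑_l Λ_l ⊗ E_l (in Frobenius norm) equals ∑_l Π(Λ_l) ⊗ E_l, where Π(Λ_l) is the PSD projection of Λ_l. -/

import Mathlib

open Kronecker

/-- Frobenius norm of a real matrix. -/
noncomputable def frobNorm {m : Type*} [Fintype m] (M : Matrix m m ℝ) : ℝ :=
  Real.sqrt (∑ i, ∑ j, (M i j) ^ 2)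

open Matrix
def fip {m : Type*} [Fintype m] (M N : Matrix m m ℝ) : ℝ := ∑ i, ∑ j, M i j * N i j

section fiplemmas
variable {m : Type*} [Fintype m]

lemma frobNorm_eq (M : Matrix m m ℝ) : frobNorm M = Real.sqrt (fip M M) := by
  simp [frobNorm, fip, sq]

lemma fip_self_nonneg (M : Matrix m m ℝ) : 0 ≤ fip M M :=
  Finset.sum_nonneg fun i _ => Finset.sum_nonneg fun j _ => mul_self_nonneg _

lemma frobNorm_le_frobNorm {A B : Matrix m m ℝ} (h : fip A A ≤ fip B B) :
    frobNorm A ≤ frobNorm B := by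
  rw [frobNorm_eq, frobNorm_eq]; exact Real.sqrt_le_sqrt h

lemma fip_comm (A B : Matrix m m ℝ) : fip A B = fip B A := by
  simp [fip, mul_comm]

lemma fip_add_left (A B C : Matrix m m ℝ) : fip (A + B) C = fip A C + fip B C := by
  simp [fip, add_mul, Finset.sum_add_distrib]

lemma fip_sub_left (A B C : Matrix m m ℝ) : fip (A - B) C = fip A C - fip B C := by
  simp [fip, sub_mul, Finset.sum_sub_distrib]

lemma fip_sub_right (A B C : Matrix m m ℝ) : fip A (B - C) = fip A B - fip A C := by
  simp [fip, mul_sub, Finset.sum_sub_distrib]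

lemma fip_smul_right (t : ℝ) (A B : Matrix m m ℝ) : fip A (t • B) = t * fip A B := by
  simp [fip, Finset.mul_sum, mul_left_comm]

lemma fip_expand (A B : Matrix m m ℝ) :
    fip (A + B) (A + B) = fip A A + 2 * fip A B + fip B B := by
  rw [fip_add_left, fip_comm A (A+B), fip_comm B (A+B), fip_add_left, fip_add_left,
    fip_comm B A]
  ring

lemma fip_sum_left {ι : Type*} (s : Finset ι) (f : ι → Matrix m m ℝ) (N : Matrix m m ℝ) :
    fip (∑ i ∈ s, f i) N = ∑ i ∈ s, fip (f i) N := by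
  simp only [fip, Matrix.sum_apply, Finset.sum_mul]
  exact (Finset.sum_congr rfl fun i _ => Finset.sum_comm).trans Finset.sum_comm

lemma fip_sum_right {ι : Type*} (s : Finset ι) (N : Matrix m m ℝ) (f : ι → Matrix m m ℝ) :
    fip N (∑ i ∈ s, f i) = ∑ i ∈ s, fip N (f i) := by
  rw [fip_comm, fip_sum_left]
  exact Finset.sum_congr rfl fun i _ => fip_comm _ _

lemma fip_eq_trace (M N : Matrix m m ℝ) : fip M N = Matrix.trace (M * Nᵀ) := by
  simp [fip, Matrix.trace, Matrix.diag, Matrix.mul_apply]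

end fiplemmas

section psd
variable {m : Type*} [Fintype m]

lemma psd_transpose_eq {A : Matrix m m ℝ} (hA : A.PosSemidef) : Aᵀ = A := by
  have := hA.1
  rwa [Matrix.IsHermitian, Matrix.conjTranspose_eq_transpose_of_trivial] at this

lemma psd_add {A B : Matrix m m ℝ} (hA : A.PosSemidef) (hB : B.PosSemidef) :
    (A + B).PosSemidef := by
  refine ⟨hA.1.add hB.1, fun x => ?_⟩
  have := add_nonneg (hA.2 x) (hB.2 x)
  simpa [add_mul, mul_add, Finsupp.sum_add] using this

lemma psd_smul {A : Matrix m m ℝ} (hA : A.PosSemidef) {t : ℝ} (ht : 0 ≤ t) :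
    (t • A).PosSemidef := by
  refine ⟨?_, fun x => ?_⟩
  · unfold Matrix.IsHermitian
    rw [Matrix.conjTranspose_smul, hA.1.eq]
    simp
  · have := mul_nonneg ht (hA.2 x)
    simpa [Matrix.smul_mulVec, dotProduct_smul, smul_eq_mul, Finsupp.mul_sum, mul_assoc, mul_left_comm] using this

lemma psd_sum {ι : Type*} (s : Finset ι) (f : ι → Matrix m m ℝ)
    (h : ∀ i ∈ s, (f i).PosSemidef) : (∑ i ∈ s, f i).PosSemidef := by
  classical
  induction s using Finset.induction_on with
  | empty => simpa using Matrix.PosSemidef.zero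
  | insert a s hni ih =>
    rw [Finset.sum_insert hni]
    exact psd_add (h a (Finset.mem_insert_self a s))
      (ih fun i hi => h i (Finset.mem_insert_of_mem hi))

lemma psd_diag_nonneg {A : Matrix m m ℝ} (hA : A.PosSemidef) (i : m) : 0 ≤ A i i := by
  classical
  have := hA.2 (Finsupp.single i 1)
  simpa [Matrix.mulVec, dotProduct, Pi.single_apply] using this

lemma psd_trace_nonneg {A : Matrix m m ℝ} (hA : A.PosSemidef) : 0 ≤ Matrix.trace A :=
  Finset.sum_nonneg fun i _ => psd_diag_nonneg hA i

lemma fip_nonneg_of_psd {A B : Matrix m m ℝ} (hA : A.PosSemidef) (hB : B.PosSemidef) :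
    0 ≤ fip A B := by
  classical
  rw [fip_eq_trace, psd_transpose_eq hB]
  obtain ⟨S, hS, rfl⟩ : ∃ S : Matrix m m ℝ, S.PosSemidef ∧ S * S = A :=
    open scoped MatrixOrder in ⟨CFC.sqrt A, (CFC.sqrt_nonneg A).posSemidef, CFC.sqrt_mul_sqrt_self A hA.nonneg⟩
  rw [Matrix.mul_assoc, Matrix.trace_mul_comm]
  have : (Sᴴ * B * S).PosSemidef := hB.conjTranspose_mul_mul_same S
  rw [hS.1.eq] at this
  exact psd_trace_nonneg this
end psd
section kron
variable {m k : Type*} [Fintype m] [Fintype k]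

lemma fip_kron (A C : Matrix m m ℝ) (B D : Matrix k k ℝ) :
    fip (A ⊗ₖ B) (C ⊗ₖ D) = fip A C * fip B D := by
  simp only [fip, Matrix.kroneckerMap_apply, Fintype.sum_prod_type]
  rw [Finset.sum_mul]
  refine Finset.sum_congr rfl fun i _ => ?_
  rw [Finset.sum_comm, Finset.sum_mul]
  refine Finset.sum_congr rfl fun j _ => ?_
  rw [Finset.mul_sum]
  refine Finset.sum_congr rfl fun a _ => ?_
  rw [Finset.mul_sum]
  exact Finset.sum_congr rfl fun b _ => by ring

lemma psd_kron {A : Matrix m m ℝ} {B : Matrix k k ℝ} (hA : A.PosSemidef)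
    (hB : B.PosSemidef) : (A ⊗ₖ B).PosSemidef := by
  classical
  obtain ⟨S, hS, rfl⟩ : ∃ S : Matrix m m ℝ, S.PosSemidef ∧ S * S = A :=
    open scoped MatrixOrder in ⟨CFC.sqrt A, (CFC.sqrt_nonneg A).posSemidef, CFC.sqrt_mul_sqrt_self A hA.nonneg⟩
  obtain ⟨T, hT, rfl⟩ : ∃ T : Matrix k k ℝ, T.PosSemidef ∧ T * T = B :=
    open scoped MatrixOrder in ⟨CFC.sqrt B, (CFC.sqrt_nonneg B).posSemidef, CFC.sqrt_mul_sqrt_self B hB.nonneg⟩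
  rw [Matrix.mul_kronecker_mul]
  have hst : (S ⊗ₖ T)ᴴ = S ⊗ₖ T := by
    rw [Matrix.conjTranspose_eq_transpose_of_trivial, ← Matrix.kroneckerMap_transpose,
      psd_transpose_eq hS, psd_transpose_eq hT]
  have := Matrix.posSemidef_conjTranspose_mul_self (S ⊗ₖ T)
  rwa [hst] at this
end kron

section proj
variable {m : Type*} [Fintype m]

/-- Variational characterization of the projection. -/
lemma proj_char {L Q : Matrix m m ℝ} (hQ : Q.PosSemidef)
    (hmin : ∀ R : Matrix m m ℝ, R.PosSemidef → frobNorm (L - Q) ≤ frobNorm (L - R))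
    {R : Matrix m m ℝ} (hR : R.PosSemidef) : fip (L - Q) (R - Q) ≤ 0 := by
  have key : ∀ t : ℝ, 0 < t → t ≤ 1 → fip (L - Q) (R - Q) ≤ t / 2 * fip (R - Q) (R - Q) := by
    intro t ht ht1
    have hQt : (Q + t • (R - Q)).PosSemidef := by
      have : Q + t • (R - Q) = (1 - t) • Q + t • R := by
        rw [smul_sub]; module
      rw [this]
      exact psd_add (psd_smul hQ (by linarith)) (psd_smul hR ht.le)
    have h1 := hmin _ hQt
    rw [frobNorm_eq, frobNorm_eq] at h1
    have h2 : fip (L - Q) (L - Q) ≤ fip (L - (Q + t • (R - Q))) (L - (Q + t • (R - Q))) := by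
      have := Real.sqrt_le_sqrt (le_of_eq (rfl : fip (L - Q) (L - Q) = _))
      nlinarith [Real.sq_sqrt (fip_self_nonneg (L - Q)),
        Real.sq_sqrt (fip_self_nonneg (L - (Q + t • (R - Q)))),
        Real.sqrt_nonneg (fip (L - Q) (L - Q)),
        Real.sqrt_nonneg (fip (L - (Q + t • (R - Q))) (L - (Q + t • (R - Q))))]
    have hdecomp : L - (Q + t • (R - Q)) = (L - Q) + (-t) • (R - Q) := by
      module
    rw [hdecomp, fip_expand] at h2
    have hsm : fip (L - Q) ((-t) • (R - Q)) = -t * fip (L - Q) (R - Q) := fip_smul_right _ _ _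
    have hsm2 : fip ((-t) • (R - Q)) ((-t) • (R - Q)) = t ^ 2 * fip (R - Q) (R - Q) := by
      rw [fip_smul_right, fip_comm, fip_smul_right]; ring
    rw [hsm, hsm2] at h2
    nlinarith
  by_contra hcon
  push_neg at hcon
  set c := fip (L - Q) (R - Q) with hc
  set d := fip (R - Q) (R - Q) with hd
  have hd0 : 0 ≤ d := fip_self_nonneg _
  rcases eq_or_lt_of_le hd0 with hdz | hdp
  · have := key 1 one_pos le_rfl
    rw [← hdz] at this; linarith
  · have htpos : 0 < min 1 (c / d) := lt_min one_pos (div_pos hcon hdp)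
    have := key _ htpos (min_le_left _ _)
    have h5 : min 1 (c / d) ≤ c / d := min_le_right _ _
    have h6 : c / d / 2 * d = c / 2 := by field_simp
    nlinarith

lemma proj_inner_self {L Q : Matrix m m ℝ} (hQ : Q.PosSemidef)
    (hmin : ∀ R : Matrix m m ℝ, R.PosSemidef → frobNorm (L - Q) ≤ frobNorm (L - R)) :
    fip (L - Q) Q = 0 := by
  have h0 := proj_char hQ hmin Matrix.PosSemidef.zero
  have h2 := proj_char hQ hmin (psd_add hQ hQ)
  rw [show (0 : Matrix m m ℝ) - Q = (0 : Matrix m m ℝ) - Q from rfl, fip_sub_right] at h0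
  rw [show Q + Q - Q = Q by abel, ] at h2
  have hz : fip (L - Q) 0 = 0 := by simp [fip]
  rw [hz] at h0
  linarith

lemma proj_inner_psd {L Q : Matrix m m ℝ} (hQ : Q.PosSemidef)
    (hmin : ∀ R : Matrix m m ℝ, R.PosSemidef → frobNorm (L - Q) ≤ frobNorm (L - R))
    {R : Matrix m m ℝ} (hR : R.PosSemidef) : fip (L - Q) R ≤ 0 := by
  have h1 := proj_char hQ hmin hR
  rw [fip_sub_right, proj_inner_self hQ hmin] at h1
  linarith

lemma proj_residual_psd {L Q : Matrix m m ℝ} (hL : L.IsSymm) (hQ : Q.PosSemidef)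
    (hmin : ∀ R : Matrix m m ℝ, R.PosSemidef → frobNorm (L - Q) ≤ frobNorm (L - R)) :
    (Q - L).PosSemidef := by
  classical
  refine Matrix.PosSemidef.of_dotProduct_mulVec_nonneg ?_ ?_
  · rw [Matrix.IsHermitian, Matrix.conjTranspose_eq_transpose_of_trivial,
      Matrix.transpose_sub, psd_transpose_eq hQ, hL.eq]
  · intro x
    have hR : (Matrix.vecMulVec x x).PosSemidef := by
      refine Matrix.PosSemidef.of_dotProduct_mulVec_nonneg ?_ ?_
      · rw [Matrix.IsHermitian, Matrix.conjTranspose_eq_transpose_of_trivial]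
        ext i j
        simp [Matrix.vecMulVec_apply, mul_comm]
      · intro y
        have : dotProduct (star y) (Matrix.vecMulVec x x *ᵥ y) = (∑ i, x i * y i) ^ 2 := by
          simp only [Matrix.vecMulVec_apply, Matrix.mulVec, dotProduct, star_trivial]
          rw [sq, Finset.sum_mul]
          refine Finset.sum_congr rfl fun i _ => ?_
          rw [Finset.mul_sum, Finset.mul_sum]
          exact Finset.sum_congr rfl fun j _ => by ring
        rw [this]; positivity
    have h1 := proj_inner_psd hQ hmin hR
    have h2 : fip (L - Q) (Matrix.vecMulVec x x) = dotProduct (star x) ((L - Q) *ᵥ x) := by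
      simp only [fip, Matrix.vecMulVec_apply, Matrix.mulVec, dotProduct, star_trivial]
      refine Finset.sum_congr rfl fun i _ => ?_
      rw [Finset.mul_sum]
      exact Finset.sum_congr rfl fun j _ => by ring
    rw [h2] at h1
    have h3 : (Q - L) *ᵥ x = -((L - Q) *ᵥ x) := by
      rw [show Q - L = -(L - Q) by abel, Matrix.neg_mulVec]
    rw [h3, dotProduct_neg]
    linarith
end proj

lemma sub_kron {m k : Type*} [Fintype m] [Fintype k] (A B : Matrix m m ℝ) (C : Matrix k k ℝ) :
    (A - B) ⊗ₖ C = A ⊗ₖ C - B ⊗ₖ C := by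
  ext ⟨i, a⟩ ⟨j, b⟩
  simp [Matrix.kroneckerMap_apply, sub_mul]

lemma fip_neg_left {m : Type*} [Fintype m] (A B : Matrix m m ℝ) : fip (-A) B = -fip A B := by
  have h := fip_sub_left 0 A B
  have h0 : fip (0 : Matrix m m ℝ) B = 0 := by simp [fip]
  rw [zero_sub, h0, zero_sub] at h
  exact h

/-- If E_0,…,E_ℓ are symmetric idempotent pairwise orthogonal PSD K×K
matrices, Λ_0,…,Λ_ℓ are symmetric n×n matrices and P_l is the Frobenius projection of
Λ_l onto the PSD cone, then ∑_l P_l ⊗ E_l is the Frobenius projection of ∑_l Λ_l ⊗ E_l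
onto the PSD cone. -/
theorem stmt_6 {n K ℓ : ℕ}
    (E : Fin (ℓ + 1) → Matrix (Fin K) (Fin K) ℝ)
    (hEsym : ∀ l, (E l).IsSymm)
    (hEidem : ∀ l, E l * E l = E l)
    (hEorth : ∀ l l', l ≠ l' → E l * E l' = 0)
    (hEpsd : ∀ l, (E l).PosSemidef)
    (Λ : Fin (ℓ + 1) → Matrix (Fin n) (Fin n) ℝ)
    (hΛsym : ∀ l, (Λ l).IsSymm)
    (P : Fin (ℓ + 1) → Matrix (Fin n) (Fin n) ℝ)
    (hPpsd : ∀ l, (P l).PosSemidef)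
    (hPproj : ∀ l, ∀ R : Matrix (Fin n) (Fin n) ℝ, R.PosSemidef →
      frobNorm (Λ l - P l) ≤ frobNorm (Λ l - R)) :
    (∑ l, (P l) ⊗ₖ (E l)).PosSemidef ∧
    ∀ R : Matrix (Fin n × Fin K) (Fin n × Fin K) ℝ, R.PosSemidef →
      frobNorm ((∑ l, (Λ l) ⊗ₖ (E l)) - ∑ l, (P l) ⊗ₖ (E l))
        ≤ frobNorm ((∑ l, (Λ l) ⊗ₖ (E l)) - R) := by
  classical
  have hX : (∑ l, P l ⊗ₖ E l).PosSemidef :=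
    psd_sum _ _ fun l _ => psd_kron (hPpsd l) (hEpsd l)
  refine ⟨hX, fun R hR => ?_⟩
  set L := ∑ l, Λ l ⊗ₖ E l with hLdef
  set X := ∑ l, P l ⊗ₖ E l with hXdef
  have hA : L - X = ∑ l, (Λ l - P l) ⊗ₖ E l := by
    rw [hLdef, hXdef, ← Finset.sum_sub_distrib]
    exact Finset.sum_congr rfl fun l _ => (sub_kron _ _ _).symm
  have hAneg : L - X = -(∑ l, (P l - Λ l) ⊗ₖ E l) := by
    rw [hA, ← Finset.sum_neg_distrib]
    refine Finset.sum_congr rfl fun l _ => ?_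
    rw [show Λ l - P l = (0 : Matrix (Fin n) (Fin n) ℝ) - (P l - Λ l) by abel, sub_kron]
    simp [Matrix.zero_kronecker]
  have hAX : fip (L - X) X = 0 := by
    rw [hA, hXdef, fip_sum_left]
    refine Finset.sum_eq_zero fun l _ => ?_
    rw [fip_sum_right]
    refine Finset.sum_eq_zero fun l' _ => ?_
    rw [fip_kron]
    by_cases h : l = l'
    · subst h
      rw [proj_inner_self (hPpsd l) (hPproj l), zero_mul]
    · have hfE : fip (E l) (E l') = 0 := by
        rw [fip_eq_trace, (hEsym l').eq, hEorth l l' h, Matrix.trace_zero]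
      rw [hfE, mul_zero]
  have hN : (∑ l, (P l - Λ l) ⊗ₖ E l).PosSemidef :=
    psd_sum _ _ fun l _ =>
      psd_kron (proj_residual_psd (hΛsym l) (hPpsd l) (hPproj l)) (hEpsd l)
  have hAR : fip (L - X) R ≤ 0 := by
    have h1 := fip_nonneg_of_psd hN hR
    rw [hAneg, fip_neg_left]
    linarith
  have hdec : L - R = (L - X) + (X - R) := by abel
  refine frobNorm_le_frobNorm ?_
  rw [hdec, fip_expand]
  have h2 : fip (L - X) (X - R) = fip (L - X) X - fip (L - X) R := fip_sub_right _ _ _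
  have h3 := fip_self_nonneg (X - R)
  nlinarith
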